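/- For every n ≥ 1 there is a first-order formula ψₙ(x,y) over the vocabulary {R} (R binary) of size s(ψₙ) = 3·2^{n+2} − 13 such that for every Kripke frame M and all points u, v of M: M ⊨ ψₙ[u/x, v/y] if and only if (M, u) and (M, v) are n-bisimilar. -/
import Mathlib


universe u v

/-- A Kripke model for a set `Φ` of proposition symbols: a set of worlds `W`,
an accessibility relation `R` and a valuation `V`. -/
structure KripkeModel (Φ : Type) : Type (u + 1) where
  W : Type u
  R : W → W → Prop
  V : Φ → W → Prop

/-- A pointed Kripke model: a Kripke model together with a distinguished world. -/
structure PointedModel (Φ : Type) : Type (u + 1) where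
  M : KripkeModel.{u} Φ
  w : M.W

/-- `n`-bisimilarity of pointed models: there are relations `Zₙ ⊆ … ⊆ Z₀` such that the
distinguished pair is in `Zₙ`, `Z₀` relates only propositionally equivalent points, and the
back-and-forth conditions hold for each `0 ≤ i ≤ n-1`. -/
def NBisim {Φ : Type} (n : ℕ) (M : KripkeModel.{u} Φ) (w : M.W)
    (N : KripkeModel.{v} Φ) (x : N.W) : Prop :=
  ∃ Z : ℕ → M.W → N.W → Prop,
    (∀ i, i < n → ∀ a b, Z (i + 1) a b → Z i a b) ∧
    Z n w x ∧
    (∀ a b, Z 0 a b → ∀ p, M.V p a ↔ N.V p b) ∧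
    (∀ i, i < n → ∀ a b, Z (i + 1) a b → ∀ c, M.R a c → ∃ d, N.R b d ∧ Z i c d) ∧
    (∀ i, i < n → ∀ a b, Z (i + 1) a b → ∀ d, N.R b d → ∃ c, M.R a c ∧ Z i c d)

/-- First-order formulas over the vocabulary `{R}` (with equality); variables are
natural numbers. -/
inductive FOForm : Type where
  | rel (x y : ℕ)
  | eq (x y : ℕ)
  | not (φ : FOForm)
  | and (φ ψ : FOForm)
  | or (φ ψ : FOForm)
  | ex (x : ℕ) (φ : FOForm)
  | all (x : ℕ) (φ : FOForm)

/-- Standard first-order semantics over a frame `(W, R)` under an assignment `s`. -/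
def FOSat {W : Type u} (R : W → W → Prop) (s : ℕ → W) : FOForm → Prop
  | .rel x y => R (s x) (s y)
  | .eq x y => s x = s y
  | .not φ => ¬ FOSat R s φ
  | .and φ ψ => FOSat R s φ ∧ FOSat R s ψ
  | .or φ ψ => FOSat R s φ ∨ FOSat R s ψ
  | .ex x φ => ∃ a : W, FOSat R (Function.update s x a) φ
  | .all x φ => ∀ a : W, FOSat R (Function.update s x a) φ

/-- The size of a first-order formula: the number of its quantifiers and binary
connectives (literals have size `0` and negation does not add to the size). -/
def fosize : FOForm → ℕ
  | .rel _ _ => 0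
  | .eq _ _ => 0
  | .not φ => fosize φ
  | .and φ ψ => fosize φ + fosize ψ + 1
  | .or φ ψ => fosize φ + fosize ψ + 1
  | .ex _ φ => fosize φ + 1
  | .all _ φ => fosize φ + 1

section Aux

/-- Implication as a shorthand. -/
def fimp (φ ψ : FOForm) : FOForm := .or (.not φ) ψ

/-- Biconditional as a shorthand. -/
def fiff (φ ψ : FOForm) : FOForm := .and (fimp φ ψ) (fimp ψ φ)

/-- The formulas `ψₙ` (index shifted: `psiF k` is `ψ_{k+1}`), with explicit
free variables `x`, `y` and fresh variables `a`, `b` to be bound. -/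
def psiF : ℕ → ℕ → ℕ → ℕ → ℕ → FOForm
  | 0, x, y, a, _ => fiff (.ex a (.rel x a)) (.ex a (.rel y a))
  | k+1, x, y, a, b =>
      .and (.all a (fimp (.rel x a) (.ex b (.and (.rel y b) (psiF k a b x y)))))
           (.all b (fimp (.rel y b) (.ex a (.and (.rel x a) (psiF k a b x y)))))

/-- Padding: a valid formula of any prescribed size. -/
def padF : ℕ → FOForm
  | 0 => .eq 2 2
  | k+1 => .and (padF k) (.eq 2 2)

lemma fosize_padF : ∀ k, fosize (padF k) = k
  | 0 => rfl
  | k+1 => by simp [padF, fosize, fosize_padF k]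

lemma sat_padF {W : Type*} (R : W → W → Prop) (s : ℕ → W) : ∀ k, FOSat R s (padF k)
  | 0 => rfl
  | k+1 => ⟨sat_padF R s k, rfl⟩

lemma fosize_psiF : ∀ k x y a b, fosize (psiF k x y a b) + 9 = 2 ^ (k + 4)
  | 0, x, y, a, b => rfl
  | k+1, x, y, a, b => by
      have h := fosize_psiF k a b x y
      have h2 : 2 ^ (k + 1 + 4) = 2 * 2 ^ (k + 4) := by ring
      simp only [psiF, fimp, fosize]
      omega

/-- Semantic `n`-bisimilarity (index shifted: `Bis R k` is `≈_{k+1}`). -/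
def Bis {W : Type*} (R : W → W → Prop) : ℕ → W → W → Prop
  | 0, u, v => (∃ c, R u c) ↔ (∃ d, R v d)
  | k+1, u, v => (∀ c, R u c → ∃ d, R v d ∧ Bis R k c d) ∧
                 (∀ d, R v d → ∃ c, R u c ∧ Bis R k c d)

lemma bis_mono {W : Type*} (R : W → W → Prop) :
    ∀ k u v, Bis R (k+1) u v → Bis R k u v
  | 0, u, v, h => by
      constructor
      · rintro ⟨c, hc⟩; obtain ⟨d, hd, -⟩ := h.1 c hc; exact ⟨d, hd⟩
      · rintro ⟨d, hd⟩; obtain ⟨c, hc, -⟩ := h.2 d hd; exact ⟨c, hc⟩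
  | k+1, u, v, h => by
      constructor
      · intro c hc
        obtain ⟨d, hd, hb⟩ := h.1 c hc
        exact ⟨d, hd, bis_mono R k c d hb⟩
      · intro d hd
        obtain ⟨c, hc, hb⟩ := h.2 d hd
        exact ⟨c, hc, bis_mono R k c d hb⟩

lemma sat_psiF {W : Type*} (R : W → W → Prop) :
    ∀ (k x y a b : ℕ), x ≠ y → a ≠ x → a ≠ y → b ≠ x → b ≠ y → a ≠ b →
      ∀ s : ℕ → W, FOSat R s (psiF k x y a b) ↔ Bis R k (s x) (s y)
  | 0, x, y, a, b, hxy, hax, hay, hbx, hby, hab, s => by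
      simp only [psiF, fiff, fimp, FOSat, Bis,
        Function.update_self, Function.update_of_ne hax.symm,
        Function.update_of_ne hay.symm]
      tauto
  | k+1, x, y, a, b, hxy, hax, hay, hbx, hby, hab, s => by
      have IH := sat_psiF (W := W) R k a b x y hab hax.symm hbx.symm hay.symm
        hby.symm hxy
      simp only [psiF, fimp, FOSat, Bis]
      constructor
      · rintro ⟨h1, h2⟩
        constructor
        · intro c hc
          rcases h1 c with h | ⟨d, hR, hψ⟩
          · exact absurd (by
              rwa [Function.update_of_ne hax.symm, Function.update_self]) h
          · refine ⟨d, ?_, ?_⟩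
            · rwa [Function.update_of_ne hby.symm,
                Function.update_of_ne hay.symm, Function.update_self] at hR
            · have := (IH _).mp hψ
              rwa [Function.update_of_ne hab, Function.update_self,
                Function.update_self] at this
        · intro d hd
          rcases h2 d with h | ⟨c, hR, hψ⟩
          · exact absurd (by
              rwa [Function.update_of_ne hby.symm, Function.update_self]) h
          · refine ⟨c, ?_, ?_⟩
            · rwa [Function.update_of_ne hax.symm,
                Function.update_of_ne hbx.symm, Function.update_self] at hR
            · have := (IH _).mp hψ
              rwa [Function.update_self, Function.update_of_ne hab.symm,
                Function.update_self] at this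
      · rintro ⟨h1, h2⟩
        constructor
        · intro c
          rw [Function.update_of_ne hax.symm, Function.update_self]
          by_cases hc : R (s x) c
          · obtain ⟨d, hR, hb⟩ := h1 c hc
            refine Or.inr ⟨d, ?_, ?_⟩
            · rwa [Function.update_of_ne hby.symm,
                Function.update_of_ne hay.symm, Function.update_self]
            · refine (IH _).mpr ?_
              rwa [Function.update_of_ne hab, Function.update_self,
                Function.update_self]
          · exact Or.inl hc
        · intro d
          rw [Function.update_of_ne hby.symm, Function.update_self]
          by_cases hd : R (s y) d
          · obtain ⟨c, hR, hb⟩ := h2 d hd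
            refine Or.inr ⟨c, ?_, ?_⟩
            · rwa [Function.update_of_ne hax.symm,
                Function.update_of_ne hbx.symm, Function.update_self]
            · refine (IH _).mpr ?_
              rwa [Function.update_self, Function.update_of_ne hab.symm,
                Function.update_self]
          · exact Or.inl hd

lemma nbisim_iff_bis (k : ℕ) (M : KripkeModel.{u} Empty) (u v : M.W) :
    NBisim (k + 1) M u M v ↔ Bis M.R k u v := by
  constructor
  · rintro ⟨Z, hmono, hZ, -, hforth, hback⟩
    have key : ∀ j, j + 1 ≤ k + 1 → ∀ a b, Z (j + 1) a b → Bis M.R j a b := by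
      intro j
      induction j with
      | zero =>
        intro hj a b hab
        constructor
        · rintro ⟨c, hc⟩
          obtain ⟨d, hd, -⟩ := hforth 0 (by omega) a b hab c hc
          exact ⟨d, hd⟩
        · rintro ⟨d, hd⟩
          obtain ⟨c, hc, -⟩ := hback 0 (by omega) a b hab d hd
          exact ⟨c, hc⟩
      | succ j IH =>
        intro hj a b hab
        constructor
        · intro c hc
          obtain ⟨d, hd, hz⟩ := hforth (j + 1) (by omega) a b hab c hc
          exact ⟨d, hd, IH (by omega) c d hz⟩
        · intro d hd
          obtain ⟨c, hc, hz⟩ := hback (j + 1) (by omega) a b hab d hd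
          exact ⟨c, hc, IH (by omega) c d hz⟩
    exact key k le_rfl u v hZ
  · intro h
    refine ⟨fun i a b => i = 0 ∨ Bis M.R (i - 1) a b, ?_, Or.inr h, ?_, ?_, ?_⟩
    · rintro i hi a b (h | h)
      · omega
      · rcases Nat.eq_zero_or_pos i with hi0 | hi0
        · exact Or.inl hi0
        · right
          obtain ⟨j, rfl⟩ := Nat.exists_eq_add_of_le' hi0
          have : Bis M.R j a b := bis_mono _ _ _ _ (by simpa using h)
          simpa using this
    · exact fun a b _ p => p.elim
    · rintro i hi a b (h | h) c hc
      · omega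
      · simp only [Nat.add_sub_cancel] at h
        rcases i with _ | j
        · obtain ⟨d, hd⟩ := h.mp ⟨c, hc⟩
          exact ⟨d, hd, Or.inl rfl⟩
        · obtain ⟨d, hd, hb⟩ := h.1 c hc
          exact ⟨d, hd, Or.inr (by simpa using hb)⟩
    · rintro i hi a b (h | h) d hd
      · omega
      · simp only [Nat.add_sub_cancel] at h
        rcases i with _ | j
        · obtain ⟨c, hc⟩ := h.mpr ⟨d, hd⟩
          exact ⟨c, hc, Or.inl rfl⟩
        · obtain ⟨c, hc, hb⟩ := h.2 d hd
          exact ⟨c, hc, Or.inr (by simpa using hb)⟩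

end Aux

/-- There is a first-order formula `ψₙ(x, y)` (free variables `x` = variable `0` and
`y` = variable `1`) of size `3 · 2^(n+2) - 13` expressing `n`-bisimilarity of two points
of a Kripke frame. -/
theorem exists_fo_formula_expressing_nbisim (n : ℕ) (hn : 1 ≤ n) :
    ∃ ψ : FOForm, fosize ψ = 3 * 2 ^ (n + 2) - 13 ∧
      ∀ (M : KripkeModel.{u} Empty) (s : ℕ → M.W),
        FOSat M.R s ψ ↔ NBisim n M (s 0) M (s 1) := by
  obtain ⟨k, rfl⟩ := Nat.exists_eq_add_of_le hn
  rw [Nat.add_comm 1 k]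
  refine ⟨.and (psiF k 0 1 2 3) (padF (2 ^ (k + 3) - 5)), ?_, ?_⟩
  · have h1 := fosize_psiF k 0 1 2 3
    have h2 := fosize_padF (2 ^ (k + 3) - 5)
    have h3 : (8 : ℕ) ≤ 2 ^ (k + 3) := by
      calc (8 : ℕ) = 2 ^ 3 := by norm_num
      _ ≤ 2 ^ (k + 3) := Nat.pow_le_pow_right (by norm_num) (by omega)
    have h4 : 2 ^ (k + 4) = 2 * 2 ^ (k + 3) := by ring
    have h5 : k + 1 + 2 = k + 3 := by omega
    rw [h5]
    simp only [fosize, h2]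
    omega
  · intro M s
    have := sat_psiF M.R k 0 1 2 3 (by omega) (by omega) (by omega) (by omega)
      (by omega) (by omega) s
    rw [nbisim_iff_bis k M (s 0) (s 1)]
    constructor
    · rintro ⟨h, -⟩; exact this.mp h
    · intro h; exact ⟨this.mpr h, sat_padF M.R s _⟩
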